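/- Fix α1, α2, α3 > 0 and, for 0 < x2 < x1, set R(x1, x2) = 1 - G(x1)^(α1+α3) - G(x2)^(α2+α3) + G(x1)^(α1) * G(x2)^(α2+α3). Then for all 0 < x2 < x1, the conditional failure rate h12(x1|x2) = -(∂²R/∂x1∂x2)/(∂R/∂x2) equals f(x1; α1) / (1 - G(x1)^(α1)), i.e. equals a*b*α1*x1^(b-1)*exp(-a*x1^b*(exp(c*x1^d)-1)+c*x1^d)*(1+(c*d/b)*x1^d-exp(-c*x1^d))*G(x1)^(α1-1) / (1 - G(x1)^(α1)). -/

import Mathlib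

open Real

/-!
The survival function factors as `R(y₁, y₂) = (1 - G(y₁)^(α₁+α₃)) + (G(y₁)^α₁ - 1) G(y₂)^(α₂+α₃)`,
so in the ratio `-∂₁∂₂R / ∂₂R` the common factor `(G^(α₂+α₃))'(x₂)` cancels, leaving
`(G^α₁)'(x₁) / (1 - G(x₁)^α₁)`; and `(G^α)'` is the EGWGD density `f(·; α)`, which is positive.
-/

/-- Base CDF of the exponentiated generalized Weibull–Gompertz distribution. -/
noncomputable def G (a b c d x : ℝ) : ℝ :=
  1 - Real.exp (-(a * x ^ b * (Real.exp (c * x ^ d) - 1)))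

/-- EGWGD(a,b,c,d,α) probability density. -/
noncomputable def egwgdPdf (a b c d α x : ℝ) : ℝ :=
  a * b * α * x ^ (b - 1) *
    Real.exp (-(a * x ^ b * (Real.exp (c * x ^ d) - 1)) + c * x ^ d) *
    (1 + (c * d / b) * x ^ d - Real.exp (-(c * x ^ d))) *
    (G a b c d x) ^ (α - 1)

lemma neg_mixed_deriv_div_deriv_eq_of_eq_add_mul {R : ℝ → ℝ → ℝ} {A p q : ℝ → ℝ}
    (hR : ∀ y₁ y₂, R y₁ y₂ = A y₁ + (p y₁ - 1) * q y₂) {x₁ x₂ p' q' : ℝ}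
    (hp : HasDerivAt p p' x₁) (hq : HasDerivAt q q' x₂) (hq' : q' ≠ 0) :
    -(deriv (fun y₁ => deriv (fun y₂ => R y₁ y₂) x₂) x₁) / deriv (fun y₂ => R x₁ y₂) x₂ =
      p' / (1 - p x₁) := by
  have inner : ∀ y₁, deriv (fun y₂ => R y₁ y₂) x₂ = (p y₁ - 1) * q' := fun y₁ => by
    simp only [hR]
    exact ((hq.const_mul (p y₁ - 1)).const_add (A y₁)).deriv
  have outer : deriv (fun y₁ => deriv (fun y₂ => R y₁ y₂) x₂) x₁ = p' * q' := by
    simp only [inner]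
    exact ((hp.sub_const 1).mul_const q').deriv
  -- no hypothesis `p x₁ ≠ 1` is needed: then both sides are `_ / 0 = 0`
  rw [outer, inner, ← neg_div_neg_eq, neg_neg, ← neg_mul, neg_sub, mul_div_mul_right _ _ hq']

section

variable {a b c d x : ℝ}

lemma G_pos (ha : 0 < a) (hc : 0 < c) (hx : 0 < x) : 0 < G a b c d x := by
  have hexp : 1 < exp (c * x ^ d) := one_lt_exp_iff.mpr (by positivity)
  have hu : 0 < a * x ^ b * (exp (c * x ^ d) - 1) := by
    have := sub_pos.mpr hexp
    positivity
  rw [G, sub_pos, exp_lt_one_iff]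
  linarith

lemma egwgdPdf_eq_mul_egwgdPdf_one (α : ℝ) :
    egwgdPdf a b c d α x = α * G a b c d x ^ (α - 1) * egwgdPdf a b c d 1 x := by
  simp only [egwgdPdf, sub_self, rpow_zero]
  ring

lemma egwgdPdf_pos {α : ℝ} (ha : 0 < a) (hb : 0 < b) (hc : 0 < c) (hd : 0 < d)
    (hα : 0 < α) (hx : 0 < x) : 0 < egwgdPdf a b c d α x := by
  have hshape : 0 < 1 + (c * d / b) * x ^ d - exp (-(c * x ^ d)) := by
    have : exp (-(c * x ^ d)) < 1 := exp_lt_one_iff.mpr (by simp only [neg_lt_zero]; positivity)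
    have : 0 < (c * d / b) * x ^ d := by positivity
    linarith
  have hG := rpow_pos_of_pos (G_pos (b := b) (d := d) ha hc hx) (α - 1)
  unfold egwgdPdf
  positivity

lemma hasDerivAt_G (hb : b ≠ 0) (hx : 0 < x) :
    HasDerivAt (G a b c d) (egwgdPdf a b c d 1 x) x := by
  have hxb : HasDerivAt (fun y : ℝ => y ^ b) (b * x ^ (b - 1)) x :=
    hasDerivAt_rpow_const (Or.inl hx.ne')
  have hxd : HasDerivAt (fun y : ℝ => y ^ d) (d * x ^ (d - 1)) x :=
    hasDerivAt_rpow_const (Or.inl hx.ne')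
  have hu := (hxb.const_mul a).mul (((hxd.const_mul c).exp).sub_const 1)
  refine (hu.neg.exp.const_sub 1).congr_deriv ?_
  simp only [Pi.mul_apply, Pi.neg_apply, egwgdPdf, sub_self, rpow_zero, exp_add,
    exp_neg (c * x ^ d), rpow_sub_one hx.ne']
  field_simp
  ring

lemma hasDerivAt_G_rpow (α : ℝ) (ha : 0 < a) (hb : b ≠ 0) (hc : 0 < c) (hx : 0 < x) :
    HasDerivAt (fun y => G a b c d y ^ α) (egwgdPdf a b c d α x) x := by
  rw [egwgdPdf_eq_mul_egwgdPdf_one]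
  convert (hasDerivAt_G hb hx).rpow_const (p := α) (Or.inl (G_pos ha hc hx).ne') using 1
  ring

end

theorem stmt_11_general (a b c d : ℝ) (ha : 0 < a) (hb : 0 < b) (hc : 0 < c) (hd : 0 < d)
    (α₁ α₂ α₃ : ℝ) (hα₂ : 0 < α₂) (hα₃ : 0 < α₃)
    (R : ℝ → ℝ → ℝ)
    (hR : ∀ y₁ y₂ : ℝ, R y₁ y₂ =
      1 - (G a b c d y₁) ^ (α₁ + α₃) - (G a b c d y₂) ^ (α₂ + α₃) +
        (G a b c d y₁) ^ α₁ * (G a b c d y₂) ^ (α₂ + α₃))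
    (x₁ x₂ : ℝ) (hx₂ : 0 < x₂) (hx₂₁ : x₂ < x₁) :
    -(deriv (fun y₁ : ℝ => deriv (fun y₂ : ℝ => R y₁ y₂) x₂) x₁) /
        (deriv (fun y₂ : ℝ => R x₁ y₂) x₂) =
      egwgdPdf a b c d α₁ x₁ / (1 - (G a b c d x₁) ^ α₁) := by
  have hR' : ∀ y₁ y₂, R y₁ y₂ = (1 - G a b c d y₁ ^ (α₁ + α₃)) +
      (G a b c d y₁ ^ α₁ - 1) * G a b c d y₂ ^ (α₂ + α₃) := fun y₁ y₂ => by
    rw [hR]; ring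
  exact neg_mixed_deriv_div_deriv_eq_of_eq_add_mul hR'
    (hasDerivAt_G_rpow α₁ ha hb.ne' hc (hx₂.trans hx₂₁))
    (hasDerivAt_G_rpow (α₂ + α₃) ha hb.ne' hc hx₂)
    (egwgdPdf_pos ha hb hc hd (add_pos hα₂ hα₃) hx₂).ne'

theorem stmt_11 (a b c d : ℝ) (ha : 0 < a) (hb : 0 < b) (hc : 0 < c) (hd : 0 < d)
    (α₁ α₂ α₃ : ℝ) (hα₁ : 0 < α₁) (hα₂ : 0 < α₂) (hα₃ : 0 < α₃)
    (R : ℝ → ℝ → ℝ)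
    (hR : ∀ y₁ y₂ : ℝ, R y₁ y₂ =
      1 - (G a b c d y₁) ^ (α₁ + α₃) - (G a b c d y₂) ^ (α₂ + α₃) +
        (G a b c d y₁) ^ α₁ * (G a b c d y₂) ^ (α₂ + α₃))
    (x₁ x₂ : ℝ) (hx₂ : 0 < x₂) (hx₂₁ : x₂ < x₁) :
    -(deriv (fun y₁ : ℝ => deriv (fun y₂ : ℝ => R y₁ y₂) x₂) x₁) /
        (deriv (fun y₂ : ℝ => R x₁ y₂) x₂) =
      egwgdPdf a b c d α₁ x₁ / (1 - (G a b c d x₁) ^ α₁) :=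
  stmt_11_general a b c d ha hb hc hd α₁ α₂ α₃ hα₂ hα₃ R hR x₁ x₂ hx₂ hx₂₁
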